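/- arXiv:math/0605066 — 2 statements merged into one kernel-verified Lean document; each statement's English description precedes it below -/
import Mathlib

section
/- Let U ⊆ ℂ² be a polydisc centered at 0, W = (ω_1,…,ω_k) a k-web on U, X a transverse infinitesimal automorphism of W, u_1,…,u_k the canonical first integrals of ω_1,…,ω_k with respect to X, and x̃ a first integral of X (holomorphic with x̃(0) = 0, X(x̃) = 0 and dx̃(0) ≠ (0,0)). Then for each pair of indices i ≠ j there exist a neighborhood V of 0 and a holomorphic function g defined near 0 ∈ ℂ such that du_i − du_j = (g∘x̃)·dx̃ on V; in particular (du_i, −du_j, −(g∘x̃)·dx̃) is an abelian relation of the 3-web (ω_i, ω_j, ω_{k+1}) where ω_{k+1} := (−Q,P) for X = (P,Q). -/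
open Complex Filter Topology

noncomputable section

/-- A point of the complex plane `ℂ²`. -/
abbrev Pt : Type := ℂ × ℂ

/-- A (holomorphic) 1-form `A dx + B dy` on (an open subset of) `ℂ²`,
identified with the pair of functions `(A, B)`. -/
abbrev Form1 : Type := (Pt → ℂ) × (Pt → ℂ)

/-- The complex partial derivative `∂f/∂x`. -/
noncomputable def pdx (f : Pt → ℂ) (p : Pt) : ℂ := fderiv ℂ f p (1, 0)

/-- The complex partial derivative `∂f/∂y`. -/
noncomputable def pdy (f : Pt → ℂ) (p : Pt) : ℂ := fderiv ℂ f p (0, 1)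

/-- The derivative `X(f) = P ∂f/∂x + Q ∂f/∂y` of `f` along the vector field `X = (P, Q)`. -/
noncomputable def Xf (P Q f : Pt → ℂ) (p : Pt) : ℂ := P p * pdx f p + Q p * pdy f p

/-- The contraction `i_X ω = A·P + B·Q` of the 1-form `ω = (A,B)` with `X = (P,Q)`. -/
noncomputable def contr (P Q : Pt → ℂ) (ω : Form1) (p : Pt) : ℂ := ω.1 p * P p + ω.2 p * Q p

/-- The wedge `ω ∧ ω' = A·B' − B·A'` of two 1-forms, as a function. -/
noncomputable def wedge (ω ω' : Form1) (p : Pt) : ℂ := ω.1 p * ω'.2 p - ω.2 p * ω'.1 p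

/-- The differential `df = (∂f/∂x, ∂f/∂y)` of a function. -/
noncomputable def fd (f : Pt → ℂ) : Form1 := (pdx f, pdy f)

/-- A 1-form `(A,B)` is closed on `U` if `∂A/∂y = ∂B/∂x` on `U`. -/
def IsClosedOn (ω : Form1) (U : Set Pt) : Prop := ∀ p ∈ U, pdy ω.1 p = pdx ω.2 p

/-- The Lie derivative `L_X ω` of the 1-form `ω = (A,B)` with respect to `X = (P,Q)`:
`L_X ω = (X(A) + A ∂P/∂x + B ∂Q/∂x, X(B) + A ∂P/∂y + B ∂Q/∂y)`. -/
noncomputable def lie (P Q : Pt → ℂ) (ω : Form1) : Form1 :=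
  (fun p => Xf P Q ω.1 p + ω.1 p * pdx P p + ω.2 p * pdx Q p,
   fun p => Xf P Q ω.2 p + ω.1 p * pdy P p + ω.2 p * pdy Q p)

/-- A 1-form is holomorphic on `U` if both its components are. -/
def AnalyticForm (ω : Form1) (U : Set Pt) : Prop :=
  AnalyticOnNhd ℂ ω.1 U ∧ AnalyticOnNhd ℂ ω.2 U
/-- A `k`-web on `U`: a `k`-tuple of holomorphic 1-forms, each nonvanishing on `U`,
pairwise transverse at the origin. -/
structure IsWeb {k : ℕ} (ω : Fin k → Form1) (U : Set Pt) : Prop where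
  analytic : ∀ i, AnalyticForm (ω i) U
  nonvanishing : ∀ i, ∀ p ∈ U, ((ω i).1 p, (ω i).2 p) ≠ (0, 0)
  transverse : ∀ i j, i ≠ j → wedge (ω i) (ω j) 0 ≠ 0

/-- An abelian relation `(η_1, …, η_k)` on `V` of the web given by `(ω_1, …, ω_k)`. -/
structure IsAbelianRelOn {k : ℕ} (ω : Fin k → Form1) (η : Fin k → Form1) (V : Set Pt) :
    Prop where
  analytic : ∀ i, AnalyticForm (η i) V
  closed : ∀ i, IsClosedOn (η i) V
  tangent : ∀ i, ∀ p ∈ V, wedge (η i) (ω i) p = 0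
  sum_fst : ∀ p ∈ V, ∑ i, (η i).1 p = 0
  sum_snd : ∀ p ∈ V, ∑ i, (η i).2 p = 0

/-- `U` is a polydisc centered at the origin. -/
def IsPolydisc (U : Set Pt) : Prop :=
  ∃ r s : ℝ, 0 < r ∧ 0 < s ∧ U = Metric.ball (0 : ℂ) r ×ˢ Metric.ball (0 : ℂ) s

/-- `X = (P,Q)` is an infinitesimal automorphism of the web `(ω_1, …, ω_k)` on `U`:
`(L_X ω_i) ∧ ω_i = 0` on `U` for all `i`. -/
def IsInfAut (P Q : Pt → ℂ) {k : ℕ} (ω : Fin k → Form1) (U : Set Pt) : Prop :=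
  ∀ i, ∀ p ∈ U, wedge (lie P Q (ω i)) (ω i) p = 0

/-- `X = (P,Q)` is transverse to the web `(ω_1, …, ω_k)` on `U`:
`i_X ω_i` is nonvanishing on `U` for all `i`. -/
def IsTransverseTo (P Q : Pt → ℂ) {k : ℕ} (ω : Fin k → Form1) (U : Set Pt) : Prop :=
  ∀ i, ∀ p ∈ U, contr P Q (ω i) p ≠ 0

/-- `u` is the canonical first integral of the 1-form `ω` with respect to `X = (P,Q)` on `U`:
`u` is holomorphic, `u(0) = 0` and `du = ω / (i_X ω)`. -/
def IsCanonicalFI (P Q : Pt → ℂ) (ω : Form1) (u : Pt → ℂ) (U : Set Pt) : Prop :=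
  AnalyticOnNhd ℂ u U ∧ u 0 = 0 ∧
    ∀ p ∈ U, pdx u p = ω.1 p / contr P Q ω p ∧ pdy u p = ω.2 p / contr P Q ω p

/-!
Since `X(u_i) = X(u_j) = 1`, `X(x̃) = 0` and `X ≠ 0`, the differentials of `f = u_i - u_j` and of
`x̃` both annihilate `X`, so `df ∧ dx̃ = 0`. Because `dx̃(0) ≠ 0`, the inverse function theorem
makes `x̃` the first coordinate of a local chart `(x̃, μ)`; in that chart `f` has zero derivative
along the second coordinate, hence `f = G ∘ x̃` near `0` and `df = (G' ∘ x̃) dx̃`. The three forms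
of the abelian relation are then the differentials of `u_i`, `-u_j` and `u_j - u_i`, so they are
closed by the symmetry of second derivatives.
-/

open Set

lemma clm_apply_eq (L : Pt →L[ℂ] ℂ) (v : Pt) : L v = v.1 * L (1, 0) + v.2 * L (0, 1) := by
  conv_lhs => rw [show v = v.1 • ((1 : ℂ), (0 : ℂ)) + v.2 • ((0 : ℂ), (1 : ℂ)) by simp]
  simp only [map_add, map_smul, smul_eq_mul]

lemma clm_eq_zero_iff (L : Pt →L[ℂ] ℂ) : L = 0 ↔ L (1, 0) = 0 ∧ L (0, 1) = 0 := by
  refine ⟨fun h => by simp [h], fun ⟨h₁, h₂⟩ => ?_⟩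
  exact ContinuousLinearMap.ext fun v => by simp [clm_apply_eq L v, h₁, h₂]

lemma fderiv_apply_eq (f : Pt → ℂ) (p v : Pt) :
    fderiv ℂ f p v = v.1 * pdx f p + v.2 * pdy f p :=
  clm_apply_eq _ v

lemma fderiv_eq_zero_iff {f : Pt → ℂ} {p : Pt} :
    fderiv ℂ f p = 0 ↔ pdx f p = 0 ∧ pdy f p = 0 :=
  clm_eq_zero_iff _

lemma pdx_neg (f : Pt → ℂ) (p : Pt) : pdx (fun q => -f q) p = -pdx f p := by
  simp [pdx, fderiv_fun_neg]

lemma pdy_neg (f : Pt → ℂ) (p : Pt) : pdy (fun q => -f q) p = -pdy f p := by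
  simp [pdy, fderiv_fun_neg]

lemma pdx_sub {f g : Pt → ℂ} {p : Pt} (hf : DifferentiableAt ℂ f p)
    (hg : DifferentiableAt ℂ g p) : pdx (fun q => f q - g q) p = pdx f p - pdx g p := by
  simp [pdx, fderiv_fun_sub hf hg]

lemma pdy_sub {f g : Pt → ℂ} {p : Pt} (hf : DifferentiableAt ℂ f p)
    (hg : DifferentiableAt ℂ g p) : pdy (fun q => f q - g q) p = pdy f p - pdy g p := by
  simp [pdy, fderiv_fun_sub hf hg]

lemma pdx_comp {G : ℂ → ℂ} {h : Pt → ℂ} {p : Pt} (hG : DifferentiableAt ℂ G (h p))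
    (hh : DifferentiableAt ℂ h p) : pdx (fun q => G (h q)) p = deriv G (h p) * pdx h p := by
  rw [pdx, pdx, show (fun q => G (h q)) = G ∘ h from rfl,
    (hG.hasDerivAt.comp_hasFDerivAt p hh.hasFDerivAt).fderiv]
  simp

lemma pdy_comp {G : ℂ → ℂ} {h : Pt → ℂ} {p : Pt} (hG : DifferentiableAt ℂ G (h p))
    (hh : DifferentiableAt ℂ h p) : pdy (fun q => G (h q)) p = deriv G (h p) * pdy h p := by
  rw [pdy, pdy, show (fun q => G (h q)) = G ∘ h from rfl,
    (hG.hasDerivAt.comp_hasFDerivAt p hh.hasFDerivAt).fderiv]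
  simp

lemma AnalyticOnNhd.pdx {f : Pt → ℂ} {s : Set Pt} (hf : AnalyticOnNhd ℂ f s) :
    AnalyticOnNhd ℂ (_root_.pdx f) s := fun p hp =>
  ((ContinuousLinearMap.apply ℂ ℂ ((1, 0) : Pt)).analyticAt _).comp (hf.fderiv p hp)

lemma AnalyticOnNhd.pdy {f : Pt → ℂ} {s : Set Pt} (hf : AnalyticOnNhd ℂ f s) :
    AnalyticOnNhd ℂ (_root_.pdy f) s := fun p hp =>
  ((ContinuousLinearMap.apply ℂ ℂ ((0, 1) : Pt)).analyticAt _).comp (hf.fderiv p hp)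

lemma AnalyticAt.pdy_pdx {f : Pt → ℂ} {p : Pt} (hf : AnalyticAt ℂ f p) :
    pdy (pdx f) p = pdx (pdy f) p := by
  have hd : DifferentiableAt ℂ (fderiv ℂ f) p := hf.fderiv.differentiableAt
  have hsymm := hf.contDiffAt.isSymmSndFDerivAt_of_omega (1, 0) (0, 1)
  change fderiv ℂ (fun q => fderiv ℂ f q (1, 0)) p (0, 1) =
    fderiv ℂ (fun q => fderiv ℂ f q (0, 1)) p (1, 0)
  rw [fderiv_clm_apply hd (differentiableAt_const _),
    fderiv_clm_apply hd (differentiableAt_const _)]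
  simpa using hsymm.symm

lemma fderiv_apply_eq_zero_of_wedge_eq_zero {f h : Pt → ℂ} {p v : Pt}
    (hw : wedge (fd f) (fd h) p = 0) (hh : fderiv ℂ h p ≠ 0) (hv : fderiv ℂ h p v = 0) :
    fderiv ℂ f p v = 0 := by
  rw [fderiv_apply_eq] at hv ⊢
  rw [Ne, fderiv_eq_zero_iff, not_and_or] at hh
  simp only [wedge, fd] at hw
  rcases hh with hx | hy
  · refine (mul_eq_zero.1 ?_).resolve_left hx
    linear_combination (-v.2) * hw + pdx f p * hv
  · refine (mul_eq_zero.1 ?_).resolve_left hy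
    linear_combination v.1 * hw + pdy f p * hv

lemma wedge_fd_eq_zero_of_xf_eq_zero {P Q f h : Pt → ℂ} {p : Pt} (hX : (P p, Q p) ≠ (0, 0))
    (hf : Xf P Q f p = 0) (hh : Xf P Q h p = 0) : wedge (fd f) (fd h) p = 0 := by
  simp only [Xf] at hf hh
  simp only [wedge, fd]
  rw [Ne, Prod.mk.injEq, not_and_or] at hX
  rcases hX with hP | hQ
  · refine (mul_eq_zero.1 ?_).resolve_left hP
    linear_combination pdy h p * hf - pdy f p * hh
  · refine (mul_eq_zero.1 ?_).resolve_left hQ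
    linear_combination pdx f p * hh - pdx h p * hf

lemma xf_sub {P Q f g : Pt → ℂ} {p : Pt} (hf : DifferentiableAt ℂ f p)
    (hg : DifferentiableAt ℂ g p) : Xf P Q (fun q => f q - g q) p = Xf P Q f p - Xf P Q g p := by
  simp only [Xf, pdx_sub hf hg, pdy_sub hf hg]
  ring

lemma vectorField_ne_zero_of_contr_ne_zero {P Q : Pt → ℂ} {ω : Form1} {p : Pt}
    (h : contr P Q ω p ≠ 0) : (P p, Q p) ≠ (0, 0) := by
  intro hPQ
  simp only [Prod.mk.injEq] at hPQ
  simp [contr, hPQ.1, hPQ.2] at h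

section CanonicalFirstIntegral

variable {P Q u : Pt → ℂ} {ω : Form1} {U : Set Pt} {p : Pt}

lemma IsCanonicalFI.xf_eq_one (hu : IsCanonicalFI P Q ω u U) (hp : p ∈ U)
    (hc : contr P Q ω p ≠ 0) : Xf P Q u p = 1 := by
  obtain ⟨hx, hy⟩ := hu.2.2 p hp
  rw [Xf, hx, hy]
  field_simp
  simp only [contr]
  ring

lemma IsCanonicalFI.wedge_fd_eq_zero (hu : IsCanonicalFI P Q ω u U) (hp : p ∈ U) :
    wedge (fd u) ω p = 0 := by
  obtain ⟨hx, hy⟩ := hu.2.2 p hp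
  simp only [wedge, fd, hx, hy]
  ring

end CanonicalFirstIntegral

lemma exists_continuousLinearEquiv_eq_prod {ℓ : Pt →L[ℂ] ℂ} (hℓ : ℓ ≠ 0) :
    ∃ (μ : Pt →L[ℂ] ℂ) (e : Pt ≃L[ℂ] Pt), (e : Pt →L[ℂ] Pt) = ℓ.prod μ := by
  have of_ker : ∀ μ : Pt →L[ℂ] ℂ, (∀ v, ℓ v = 0 → μ v = 0 → v = 0) →
      ∃ e : Pt ≃L[ℂ] Pt, (e : Pt →L[ℂ] Pt) = ℓ.prod μ := fun μ hμ =>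
    have hinj : Function.Injective (ℓ.prod μ) := (injective_iff_map_eq_zero _).2
      fun v hv => hμ v (congrArg Prod.fst hv) (congrArg Prod.snd hv)
    ⟨(LinearEquiv.ofInjectiveEndo (ℓ.prod μ : Pt →ₗ[ℂ] Pt) hinj).toContinuousLinearEquiv, rfl⟩
  rw [Ne, clm_eq_zero_iff, not_and_or] at hℓ
  rcases hℓ with hx | hy
  · refine ⟨_, of_ker (ContinuousLinearMap.snd ℂ ℂ ℂ) fun v hv hv₂ => ?_⟩
    simp only [ContinuousLinearMap.coe_snd'] at hv₂
    simp only [clm_apply_eq ℓ v, hv₂, zero_mul, add_zero, mul_eq_zero, hx, or_false] at hv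
    exact Prod.ext hv hv₂
  · refine ⟨_, of_ker (ContinuousLinearMap.fst ℂ ℂ ℂ) fun v hv hv₁ => ?_⟩
    simp only [ContinuousLinearMap.coe_fst'] at hv₁
    simp only [clm_apply_eq ℓ v, hv₁, zero_mul, zero_add, mul_eq_zero, hy, or_false] at hv
    exact Prod.ext hv₁ hv

lemma exists_chart_fst_eq {h : Pt → ℂ} {a : Pt} (hh : AnalyticAt ℂ h a)
    (ha : fderiv ℂ h a ≠ 0) :
    ∃ Φ Ψ : Pt → Pt, (∀ q, (Φ q).1 = h q) ∧ ContinuousAt Φ a ∧ Tendsto Ψ (𝓝 (Φ a)) (𝓝 a) ∧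
      (∀ᶠ p in 𝓝 a, Ψ (Φ p) = p) ∧ ∀ᶠ z in 𝓝 (Φ a), Φ (Ψ z) = z ∧ DifferentiableAt ℂ Ψ z := by
  obtain ⟨μ, e, he⟩ := exists_continuousLinearEquiv_eq_prod ha
  set Φ : Pt → Pt := fun q => (h q, μ q)
  have hΦ : ContDiffAt ℂ 1 Φ a := (hh.prod (μ.analyticAt a)).contDiffAt
  have hΦ' : HasFDerivAt Φ (e : Pt →L[ℂ] Pt) a :=
    he ▸ hh.differentiableAt.hasFDerivAt.prodMk μ.hasFDerivAt
  have hs := hΦ.hasStrictFDerivAt' hΦ' one_ne_zero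
  refine ⟨Φ, hΦ.localInverse hΦ' one_ne_zero, fun q => rfl, hΦ.continuousAt,
    hs.localInverse_tendsto, hs.eventually_left_inverse, hs.eventually_right_inverse.and ?_⟩
  exact ((hΦ.to_localInverse hΦ' one_ne_zero).eventually (by simp)).mono
    fun z hz => hz.differentiableAt one_ne_zero

open Metric in
lemma eq_of_forall_pdy_eq_zero {F : Pt → ℂ} {c : Pt} {r : ℝ}
    (hF : ∀ z ∈ ball c r, DifferentiableAt ℂ F z) (hF' : ∀ z ∈ ball c r, pdy F z = 0)
    {z : Pt} (hz : z ∈ ball c r) : F z = F (z.1, c.2) := by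
  have hmem : ∀ t ∈ ball c.2 r, (z.1, t) ∈ ball c r := fun t ht =>
    max_lt (mem_ball.1 hz |>.trans_le' (le_max_left _ _)) ht
  have hderiv : ∀ t ∈ ball c.2 r, HasDerivAt (fun t => F (z.1, t)) (pdy F (z.1, t)) t :=
    fun t ht => (hF _ (hmem t ht)).hasFDerivAt.comp_hasDerivAt t
      ((hasDerivAt_const t z.1).prodMk (hasDerivAt_id t))
  exact isOpen_ball.is_const_of_deriv_eq_zero (convex_ball _ _).isPreconnected
    (fun t ht => (hderiv t ht).differentiableAt.differentiableWithinAt)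
    (fun t ht => (hderiv t ht).deriv.trans (hF' _ (hmem t ht)))
    (max_lt_iff.1 (mem_ball.1 hz)).2 (mem_ball_self (pos_of_mem_ball hz))

lemma pdy_comp_eq_zero_of_comp_eventuallyEq_fst {f h : Pt → ℂ} {Ψ : Pt → Pt} {z : Pt}
    (hΨ : DifferentiableAt ℂ Ψ z) (hf : DifferentiableAt ℂ f (Ψ z))
    (hh : DifferentiableAt ℂ h (Ψ z)) (hhΨ : (fun w => h (Ψ w)) =ᶠ[𝓝 z] Prod.fst)
    (hw : wedge (fd f) (fd h) (Ψ z) = 0) : pdy (fun w => f (Ψ w)) z = 0 := by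
  have hchain : (fderiv ℂ h (Ψ z)).comp (fderiv ℂ Ψ z) = ContinuousLinearMap.fst ℂ ℂ ℂ := by
    rw [← fderiv_comp z hh hΨ, ← fderiv_fst]
    exact hhΨ.fderiv_eq
  have hne : fderiv ℂ h (Ψ z) ≠ 0 := fun h0 => by
    simpa [h0] using congrArg (fun L : Pt →L[ℂ] ℂ => L (1, 0)) hchain
  rw [pdy, show (fun w => f (Ψ w)) = f ∘ Ψ from rfl, fderiv_comp z hf hΨ]
  exact fderiv_apply_eq_zero_of_wedge_eq_zero hw hne
    (by simpa using congrArg (fun L : Pt →L[ℂ] ℂ => L (0, 1)) hchain)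

section LocalFactorization

variable {f h : Pt → ℂ} {U : Set Pt} {a : Pt}

open Metric in
theorem exists_eqOn_comp_of_wedge_fd_eq_zero (hU : U ∈ 𝓝 a) (hf : AnalyticOnNhd ℂ f U)
    (hh : AnalyticOnNhd ℂ h U) (ha : fderiv ℂ h a ≠ 0)
    (hw : ∀ p ∈ U, wedge (fd f) (fd h) p = 0) :
    ∃ V, IsOpen V ∧ a ∈ V ∧ V ⊆ U ∧ ∃ D, IsOpen D ∧ MapsTo h V D ∧
      ∃ G : ℂ → ℂ, AnalyticOnNhd ℂ G D ∧ EqOn f (G ∘ h) V := by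
  obtain ⟨Φ, Ψ, hΦh, hΦ, hΨ, hleft, hright⟩ := exists_chart_fst_eq (hh a (mem_of_mem_nhds hU)) ha
  obtain ⟨r, hr, hball⟩ := eventually_nhds_iff_ball.1 ((hΨ.eventually hU).and hright)
  have hfΨ : ∀ z ∈ ball (Φ a) r, DifferentiableAt ℂ (fun w => f (Ψ w)) z := fun z hz =>
    (hf _ (hball z hz).1).differentiableAt.comp z (hball z hz).2.2
  have hconst : ∀ z ∈ ball (Φ a) r, f (Ψ z) = f (Ψ (z.1, (Φ a).2)) :=
    fun z hz => eq_of_forall_pdy_eq_zero (F := fun w => f (Ψ w)) hfΨ (fun w hwr =>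
      pdy_comp_eq_zero_of_comp_eventuallyEq_fst (hball w hwr).2.2
        (hf _ (hball w hwr).1).differentiableAt (hh _ (hball w hwr).1).differentiableAt
        (eventually_of_mem (isOpen_ball.mem_nhds hwr) fun v hv => by
          change h (Ψ v) = v.1
          rw [← hΦh, (hball v hv).2.1])
        (hw _ (hball w hwr).1)) hz
  have hV : {p | p ∈ U ∧ Φ p ∈ ball (Φ a) r ∧ Ψ (Φ p) = p} ∈ 𝓝 a :=
    (eventually_mem_set.2 hU).and ((hΦ.eventually_mem (ball_mem_nhds _ hr)).and hleft)
  have hmaps : ∀ p ∈ interior {p | p ∈ U ∧ Φ p ∈ ball (Φ a) r ∧ Ψ (Φ p) = p},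
      h p ∈ ball (h a) r := fun p hp => by
    simpa [← hΦh] using (max_lt_iff.1 (mem_ball.1 (interior_subset hp).2.1)).1
  refine ⟨_, isOpen_interior, mem_interior_iff_mem_nhds.2 hV,
    fun p hp => (interior_subset hp).1, ball (h a) r, isOpen_ball, hmaps,
    fun t => f (Ψ (t, (Φ a).2)), ?_, fun p hp => ?_⟩
  · refine DifferentiableOn.analyticOnNhd (fun t ht => ?_) isOpen_ball
    have hmem : (t, (Φ a).2) ∈ ball (Φ a) r :=
      mem_ball.2 (by rw [Prod.dist_eq, dist_self, hΦh]; exact max_lt (mem_ball.1 ht) hr)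
    have hline : DifferentiableAt ℂ (fun t : ℂ => ((t, (Φ a).2) : Pt)) t :=
      differentiableAt_id.prodMk (differentiableAt_const _)
    exact ((hfΨ _ hmem).comp t hline).differentiableWithinAt
  · obtain ⟨-, hpball, hpΨ⟩ := interior_subset hp
    simp only [Function.comp_apply, ← hΦh, ← hconst _ hpball, hpΨ]

theorem exists_fd_eq_mul_fd_of_wedge_fd_eq_zero (hU : U ∈ 𝓝 a) (hf : AnalyticOnNhd ℂ f U)
    (hh : AnalyticOnNhd ℂ h U) (ha : fderiv ℂ h a ≠ 0)
    (hw : ∀ p ∈ U, wedge (fd f) (fd h) p = 0) :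
    ∃ V, IsOpen V ∧ a ∈ V ∧ V ⊆ U ∧ ∃ D, IsOpen D ∧ MapsTo h V D ∧
      ∃ g : ℂ → ℂ, AnalyticOnNhd ℂ g D ∧
        ∀ p ∈ V, pdx f p = g (h p) * pdx h p ∧ pdy f p = g (h p) * pdy h p := by
  obtain ⟨V, hVo, haV, hVU, D, hDo, hVD, G, hG, hfG⟩ :=
    exists_eqOn_comp_of_wedge_fd_eq_zero hU hf hh ha hw
  refine ⟨V, hVo, haV, hVU, D, hDo, hVD, deriv G, hG.deriv, fun p hp => ?_⟩
  have hGd := (hG _ (hVD hp)).differentiableAt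
  have hhd := (hh p (hVU hp)).differentiableAt
  have hfe : fderiv ℂ f p = fderiv ℂ (fun q => G (h q)) p :=
    (hfG.eventuallyEq_of_mem (hVo.mem_nhds hp)).fderiv_eq
  exact ⟨by rw [pdx, hfe]; exact pdx_comp hGd hhd, by rw [pdy, hfe]; exact pdy_comp hGd hhd⟩

end LocalFactorization

lemma IsPolydisc.mem_nhds {U : Set Pt} (hU : IsPolydisc U) : U ∈ 𝓝 (0 : Pt) := by
  obtain ⟨r, s, hr, hs, rfl⟩ := hU
  exact prod_mem_nhds (Metric.ball_mem_nhds 0 hr) (Metric.ball_mem_nhds 0 hs)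

section ExactForms

variable {η : Form1} {H : Pt → ℂ} {V : Set Pt}

lemma AnalyticForm.of_eqOn_fd (hV : IsOpen V) (hH : AnalyticOnNhd ℂ H V)
    (hη : ∀ p ∈ V, η.1 p = pdx H p ∧ η.2 p = pdy H p) : AnalyticForm η V :=
  ⟨fun p hp => (hH.pdx p hp).congr
      (eventually_of_mem (hV.mem_nhds hp) fun q hq => (hη q hq).1.symm),
    fun p hp => (hH.pdy p hp).congr
      (eventually_of_mem (hV.mem_nhds hp) fun q hq => (hη q hq).2.symm)⟩

lemma IsClosedOn.of_eqOn_fd (hV : IsOpen V) (hH : AnalyticOnNhd ℂ H V)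
    (hη : ∀ p ∈ V, η.1 p = pdx H p ∧ η.2 p = pdy H p) : IsClosedOn η V := fun p hp => by
  have h₁ : fderiv ℂ η.1 p = fderiv ℂ (pdx H) p :=
    Filter.EventuallyEq.fderiv_eq (eventually_of_mem (hV.mem_nhds hp) fun q hq => (hη q hq).1)
  have h₂ : fderiv ℂ η.2 p = fderiv ℂ (pdy H) p :=
    Filter.EventuallyEq.fderiv_eq (eventually_of_mem (hV.mem_nhds hp) fun q hq => (hη q hq).2)
  rw [pdy, pdx, h₁, h₂]
  exact (hH p hp).pdy_pdx

end ExactForms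

lemma IsAbelianRelOn.of_primitives {k : ℕ} {ω η : Fin k → Form1} {V : Set Pt} (hV : IsOpen V)
    (H : Fin k → Pt → ℂ) (hH : ∀ l, AnalyticOnNhd ℂ (H l) V)
    (hη : ∀ l, ∀ p ∈ V, (η l).1 p = pdx (H l) p ∧ (η l).2 p = pdy (H l) p)
    (htan : ∀ l, ∀ p ∈ V, wedge (η l) (ω l) p = 0)
    (hsum : ∀ p ∈ V, ∑ l, (η l).1 p = 0 ∧ ∑ l, (η l).2 p = 0) : IsAbelianRelOn ω η V :=
  ⟨fun l => .of_eqOn_fd hV (hH l) (hη l), fun l => .of_eqOn_fd hV (hH l) (hη l), htan,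
    fun p hp => (hsum p hp).1, fun p hp => (hsum p hp).2⟩

lemma isAbelianRelOn_of_fd_sub_eq_mul_fd {P Q u₁ u₂ xt : Pt → ℂ} {ω₁ ω₂ : Form1} {g : ℂ → ℂ}
    {V : Set Pt} (hV : IsOpen V) (hu₁ : AnalyticOnNhd ℂ u₁ V) (hu₂ : AnalyticOnNhd ℂ u₂ V)
    (htan₁ : ∀ p ∈ V, wedge (fd u₁) ω₁ p = 0) (htan₂ : ∀ p ∈ V, wedge (fd u₂) ω₂ p = 0)
    (hXxt : ∀ p ∈ V, Xf P Q xt p = 0)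
    (hdiff : ∀ p ∈ V, pdx u₁ p - pdx u₂ p = g (xt p) * pdx xt p ∧
      pdy u₁ p - pdy u₂ p = g (xt p) * pdy xt p) :
    IsAbelianRelOn ![ω₁, ω₂, (fun p => -Q p, P)]
      ![fd u₁, (fun p => -pdx u₂ p, fun p => -pdy u₂ p),
        (fun p => -(g (xt p) * pdx xt p), fun p => -(g (xt p) * pdy xt p))] V := by
  refine .of_primitives hV ![u₁, fun q => -u₂ q, fun q => u₂ q - u₁ q] ?_ ?_ ?_ ?_
  · intro l
    fin_cases l
    exacts [hu₁, hu₂.neg, hu₂.sub hu₁]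
  · intro l p hp
    fin_cases l <;> simp only [Fin.reduceFinMk, Matrix.cons_val, fd, and_self]
    · exact ⟨(pdx_neg _ _).symm, (pdy_neg _ _).symm⟩
    · have h₁ := (hu₁ p hp).differentiableAt
      have h₂ := (hu₂ p hp).differentiableAt
      simp only [pdx_sub h₂ h₁, pdy_sub h₂ h₁]
      exact ⟨by linear_combination (hdiff p hp).1, by linear_combination (hdiff p hp).2⟩
  · intro l p hp
    fin_cases l <;> simp only [Fin.reduceFinMk, Matrix.cons_val]
    · exact htan₁ p hp
    · have := htan₂ p hp
      simp only [wedge, fd] at this ⊢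
      linear_combination -this
    · have := hXxt p hp
      simp only [wedge, Xf] at this ⊢
      linear_combination -g (xt p) * this
  · intro p hp
    simp only [Fin.sum_univ_three, Matrix.cons_val, fd]
    exact ⟨by linear_combination (hdiff p hp).1, by linear_combination (hdiff p hp).2⟩

theorem stmt_7_general (k : ℕ) (U : Set Pt) (hU : IsPolydisc U) (ω : Fin k → Form1)
    (P Q : Pt → ℂ)
    (htr : IsTransverseTo P Q ω U)
    (u : Fin k → Pt → ℂ) (hu : ∀ i, IsCanonicalFI P Q (ω i) (u i) U)
    (xt : Pt → ℂ) (hxt : AnalyticOnNhd ℂ xt U) (hxt0 : xt 0 = 0)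
    (hXxt : ∀ p ∈ U, Xf P Q xt p = 0) (hdxt0 : (pdx xt 0, pdy xt 0) ≠ (0, 0))
    (i j : Fin k) :
    ∃ V ∈ 𝓝 (0 : Pt), V ⊆ U ∧ ∃ D ∈ 𝓝 (0 : ℂ), ∃ g : ℂ → ℂ, AnalyticOnNhd ℂ g D ∧
      (∀ p ∈ V, xt p ∈ D) ∧
      (∀ p ∈ V, pdx (u i) p - pdx (u j) p = g (xt p) * pdx xt p ∧
                pdy (u i) p - pdy (u j) p = g (xt p) * pdy xt p) ∧
      IsAbelianRelOn ![ω i, ω j, (fun p => -Q p, P)]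
        ![fd (u i), (fun p => -pdx (u j) p, fun p => -pdy (u j) p),
          (fun p => -(g (xt p) * pdx xt p), fun p => -(g (xt p) * pdy xt p))] V := by
  have hui := (hu i).1
  have huj := (hu j).1
  have hXf : ∀ p ∈ U, Xf P Q (fun q => u i q - u j q) p = 0 := fun p hp => by
    rw [xf_sub (hui p hp).differentiableAt (huj p hp).differentiableAt,
      (hu i).xf_eq_one hp (htr i p hp), (hu j).xf_eq_one hp (htr j p hp), sub_self]
  obtain ⟨V, hVo, h0V, hVU, D, hDo, hVD, g, hg, hfg⟩ :=
    exists_fd_eq_mul_fd_of_wedge_fd_eq_zero hU.mem_nhds (hui.sub huj) hxt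
      (by simpa [fderiv_eq_zero_iff] using hdxt0) fun p hp =>
        wedge_fd_eq_zero_of_xf_eq_zero (vectorField_ne_zero_of_contr_ne_zero (htr i p hp))
          (hXf p hp) (hXxt p hp)
  have hdiff : ∀ p ∈ V, pdx (u i) p - pdx (u j) p = g (xt p) * pdx xt p ∧
      pdy (u i) p - pdy (u j) p = g (xt p) * pdy xt p := fun p hp => by
    have hi := (hui p (hVU hp)).differentiableAt
    have hj := (huj p (hVU hp)).differentiableAt
    rw [← pdx_sub hi hj, ← pdy_sub hi hj]
    exact hfg p hp
  refine ⟨V, hVo.mem_nhds h0V, hVU, D, hDo.mem_nhds (hxt0 ▸ hVD h0V), g, hg, hVD, hdiff,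
    isAbelianRelOn_of_fd_sub_eq_mul_fd hVo (hui.mono hVU) (huj.mono hVU)
      (fun p hp => (hu i).wedge_fd_eq_zero (hVU hp)) (fun p hp => (hu j).wedge_fd_eq_zero (hVU hp))
      (fun p hp => hXxt p (hVU hp)) hdiff⟩

/-- With `W` a `k`-web on a polydisc `U`, `X = (P,Q)` a transverse
infinitesimal automorphism, `u_i` the canonical first integrals and `x̃` a first integral
of `X`, for every pair `i ≠ j` there is, near `0`, a holomorphic `g` with
`du_i − du_j = (g∘x̃)·dx̃`; in particular `(du_i, −du_j, −(g∘x̃)·dx̃)` is an abelian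
relation of the 3-web `(ω_i, ω_j, ω_{k+1})`, where `ω_{k+1} = (−Q, P)`. -/
theorem stmt_7 (k : ℕ) (U : Set Pt) (hU : IsPolydisc U) (ω : Fin k → Form1)
    (hweb : IsWeb ω U) (P Q : Pt → ℂ)
    (hP : AnalyticOnNhd ℂ P U) (hQ : AnalyticOnNhd ℂ Q U)
    (hinf : IsInfAut P Q ω U) (htr : IsTransverseTo P Q ω U)
    (u : Fin k → Pt → ℂ) (hu : ∀ i, IsCanonicalFI P Q (ω i) (u i) U)
    (xt : Pt → ℂ) (hxt : AnalyticOnNhd ℂ xt U) (hxt0 : xt 0 = 0)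
    (hXxt : ∀ p ∈ U, Xf P Q xt p = 0) (hdxt0 : (pdx xt 0, pdy xt 0) ≠ (0, 0))
    (i j : Fin k) (hij : i ≠ j) :
    ∃ V ∈ 𝓝 (0 : Pt), V ⊆ U ∧ ∃ D ∈ 𝓝 (0 : ℂ), ∃ g : ℂ → ℂ, AnalyticOnNhd ℂ g D ∧
      (∀ p ∈ V, xt p ∈ D) ∧
      (∀ p ∈ V, pdx (u i) p - pdx (u j) p = g (xt p) * pdx xt p ∧
                pdy (u i) p - pdy (u j) p = g (xt p) * pdy xt p) ∧
      IsAbelianRelOn ![ω i, ω j, (fun p => -Q p, P)]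
        ![fd (u i), (fun p => -pdx (u j) p, fun p => -pdy (u j) p),
          (fun p => -(g (xt p) * pdx xt p), fun p => -(g (xt p) * pdy xt p))] V :=
  stmt_7_general k U hU ω P Q htr u hu xt hxt hxt0 hXxt hdxt0 i j
end
end

section
/- Let U ⊆ ℂ² be a polydisc centered at 0, W = (ω_1,…,ω_k) a k-web on U, X a transverse infinitesimal automorphism of W, and u_1,…,u_k the canonical first integrals with respect to X. Let λ ∈ ℂ, λ ≠ 0, and let (α_1,…,α_k) be an abelian relation of W with L_X α_i = λ·α_i for all i. Then there exist constants c_1,…,c_k ∈ ℂ such that, on a neighborhood of 0, α_i = (c_i·e^{λ·u_i})·du_i for each i, and the function c_1·e^{λ·u_1} + ⋯ + c_k·e^{λ·u_k} is constant on that neighborhood. -/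
open Complex Filter Topology

noncomputable section

/-! With `g_i := i_X α_i`, tangency of `α_i` to `ω_i` gives `α_i = g_i du_i`, and Cartan's
formula for the closed form `α_i` gives `dg_i = L_X α_i = λ α_i = λ g_i du_i`. Hence
`g_i e^{-λ u_i}` is constant on the (connected) polydisc, and `c_i := g_i(0)` works since
`u_i(0) = 0`. Finally `∑ g_i = i_X (∑ α_i) = 0`. -/

lemma IsPolydisc.isOpen {U : Set Pt} (hU : IsPolydisc U) : IsOpen U := by
  obtain ⟨r, s, -, -, rfl⟩ := hU
  exact Metric.isOpen_ball.prod Metric.isOpen_ball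

lemma IsPolydisc.isPreconnected {U : Set Pt} (hU : IsPolydisc U) : IsPreconnected U := by
  obtain ⟨r, s, -, -, rfl⟩ := hU
  exact ((convex_ball (0 : ℂ) r).prod (convex_ball (0 : ℂ) s)).isPreconnected

lemma IsPolydisc.zero_mem {U : Set Pt} (hU : IsPolydisc U) : (0 : Pt) ∈ U := by
  obtain ⟨r, s, hr, hs, rfl⟩ := hU
  exact ⟨Metric.mem_ball_self hr, Metric.mem_ball_self hs⟩

lemma Pt.continuousLinearMap_ext {L M : Pt →L[ℂ] ℂ} (h₁ : L (1, 0) = M (1, 0)) (h₂ : L (0, 1) = M (0, 1)) :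
    L = M :=
  ContinuousLinearMap.prod_ext (ContinuousLinearMap.ext_ring (by simpa using h₁))
    (ContinuousLinearMap.ext_ring (by simpa using h₂))

lemma IsOpen.eq_mul_exp_of_fderiv_eq_smul {E : Type*} [NormedAddCommGroup E] [NormedSpace ℂ E]
    {s : Set E} {f u : E → ℂ} {l : ℂ} (hs : IsOpen s) (hs' : IsPreconnected s)
    (hf : DifferentiableOn ℂ f s) (hu : DifferentiableOn ℂ u s)
    (hfu : ∀ x ∈ s, fderiv ℂ f x = (l * f x) • fderiv ℂ u x) {x y : E} (hx : x ∈ s)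
    (hy : y ∈ s) : f x = f y * Complex.exp (l * (u x - u y)) := by
  set h : E → ℂ := fun z => f z * Complex.exp (-(l * u z))
  have hh : ∀ z ∈ s, HasFDerivAt h (0 : E →L[ℂ] ℂ) z := by
    intro z hz
    have hfz := (hf.differentiableAt (hs.mem_nhds hz)).hasFDerivAt
    have huz := (hu.differentiableAt (hs.mem_nhds hz)).hasFDerivAt
    refine (hfz.mul ((huz.const_mul l).neg.cexp)).congr_fderiv ?_
    ext v
    simp only [Pi.neg_apply, smul_neg, hfu z hz, add_apply, neg_apply, smul_apply, smul_eq_mul,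
      zero_apply]
    ring
  have hconst : h x = h y := hs.is_const_of_fderiv_eq_zero hs'
    (fun z hz => (hh z hz).differentiableAt.differentiableWithinAt)
    (fun z hz => (hh z hz).fderiv) hx hy
  calc f x = h x * Complex.exp (l * u x) := by simp [h, mul_assoc, ← Complex.exp_add]
    _ = f y * Complex.exp (l * (u x - u y)) := by
      rw [hconst, mul_sub, sub_eq_neg_add, Complex.exp_add, mul_assoc]

lemma eq_contr_mul_fd_of_wedge_eq_zero {P Q u : Pt → ℂ} {η ω : Form1} {p : Pt}
    (hwedge : wedge η ω p = 0) (hcontr : contr P Q ω p ≠ 0)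
    (hux : pdx u p = ω.1 p / contr P Q ω p) (huy : pdy u p = ω.2 p / contr P Q ω p) :
    η.1 p = contr P Q η p * pdx u p ∧ η.2 p = contr P Q η p * pdy u p := by
  rw [hux, huy, mul_div_assoc', mul_div_assoc', eq_div_iff hcontr, eq_div_iff hcontr]
  unfold wedge at hwedge
  unfold contr
  constructor
  · linear_combination Q p * hwedge
  · linear_combination -P p * hwedge

lemma fderiv_contr_apply {P Q : Pt → ℂ} {η : Form1} {p : Pt} (h₁ : DifferentiableAt ℂ η.1 p)
    (h₂ : DifferentiableAt ℂ η.2 p) (hP : DifferentiableAt ℂ P p) (hQ : DifferentiableAt ℂ Q p)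
    (v : Pt) :
    fderiv ℂ (contr P Q η) p v = fderiv ℂ η.1 p v * P p + η.1 p * fderiv ℂ P p v +
      fderiv ℂ η.2 p v * Q p + η.2 p * fderiv ℂ Q p v := by
  rw [show contr P Q η = η.1 * P + η.2 * Q from rfl, fderiv_add (h₁.mul hP) (h₂.mul hQ),
    fderiv_mul h₁ hP, fderiv_mul h₂ hQ]
  simp only [add_apply, smul_apply, smul_eq_mul]
  ring

/-- Cartan's formula `L_X η = d (i_X η) + i_X dη` for a closed form `η`. -/
lemma fd_contr_eq_lie_of_closed {P Q : Pt → ℂ} {η : Form1} {p : Pt}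
    (h₁ : DifferentiableAt ℂ η.1 p) (h₂ : DifferentiableAt ℂ η.2 p)
    (hP : DifferentiableAt ℂ P p) (hQ : DifferentiableAt ℂ Q p)
    (hclosed : pdy η.1 p = pdx η.2 p) :
    pdx (contr P Q η) p = (lie P Q η).1 p ∧ pdy (contr P Q η) p = (lie P Q η).2 p := by
  unfold pdx pdy at hclosed ⊢
  simp only [lie, Xf, pdx, pdy, fderiv_contr_apply h₁ h₂ hP hQ]
  constructor
  · linear_combination -Q p * hclosed
  · linear_combination P p * hclosed

lemma IsAbelianRelOn.sum_contr_eq_zero {k : ℕ} {ω η : Fin k → Form1} {V : Set Pt}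
    (hη : IsAbelianRelOn ω η V) (P Q : Pt → ℂ) {p : Pt} (hp : p ∈ V) :
    ∑ i, contr P Q (η i) p = 0 := by
  simp only [contr, Finset.sum_add_distrib, ← Finset.sum_mul, hη.sum_fst p hp,
    hη.sum_snd p hp, zero_mul, add_zero]

lemma contr_eq_mul_exp_of_lie_eq_smul {U : Set Pt} (hUo : IsOpen U) (hUc : IsPreconnected U)
    {P Q u : Pt → ℂ} {ω α : Form1} {l : ℂ}
    (hP : AnalyticOnNhd ℂ P U) (hQ : AnalyticOnNhd ℂ Q U)
    (htr : ∀ p ∈ U, contr P Q ω p ≠ 0) (hu : IsCanonicalFI P Q ω u U)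
    (hα : AnalyticForm α U) (hclosed : IsClosedOn α U) (htan : ∀ p ∈ U, wedge α ω p = 0)
    (heig : ∀ p ∈ U, (lie P Q α).1 p = l * α.1 p ∧ (lie P Q α).2 p = l * α.2 p)
    {p q : Pt} (hp : p ∈ U) (hq : q ∈ U) :
    contr P Q α p = contr P Q α q * Complex.exp (l * (u p - u q)) := by
  have hdiff : DifferentiableOn ℂ (contr P Q α) U := fun z hz =>
    (((hα.1 z hz).mul (hP z hz)).add ((hα.2 z hz).mul (hQ z hz))).differentiableAt
      |>.differentiableWithinAt
  refine hUo.eq_mul_exp_of_fderiv_eq_smul hUc hdiff hu.1.differentiableOn (fun z hz => ?_) hp hq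
  obtain ⟨hdx, hdy⟩ := fd_contr_eq_lie_of_closed (hα.1 z hz).differentiableAt
    (hα.2 z hz).differentiableAt (hP z hz).differentiableAt (hQ z hz).differentiableAt
    (hclosed z hz)
  obtain ⟨hαx, hαy⟩ := eq_contr_mul_fd_of_wedge_eq_zero (htan z hz) (htr z hz)
    (hu.2.2 z hz).1 (hu.2.2 z hz).2
  obtain ⟨hex, hey⟩ := heig z hz
  apply Pt.continuousLinearMap_ext
  · rw [smul_apply, smul_eq_mul]
    rw [pdx] at hdx hαx
    rw [hdx, hex, hαx, mul_assoc]
  · rw [smul_apply, smul_eq_mul]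
    rw [pdy] at hdy hαy
    rw [hdy, hey, hαy, mul_assoc]

theorem stmt_11_general (k : ℕ) (U : Set Pt) (hU : IsPolydisc U) (ω : Fin k → Form1)
    (P Q : Pt → ℂ)
    (hP : AnalyticOnNhd ℂ P U) (hQ : AnalyticOnNhd ℂ Q U)
    (htr : IsTransverseTo P Q ω U)
    (u : Fin k → Pt → ℂ) (hu : ∀ i, IsCanonicalFI P Q (ω i) (u i) U)
    (l : ℂ)
    (α : Fin k → Form1) (hα : IsAbelianRelOn ω α U)
    (heig : ∀ i, ∀ p ∈ U, (lie P Q (α i)).1 p = l * (α i).1 p ∧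
                          (lie P Q (α i)).2 p = l * (α i).2 p) :
    ∃ c : Fin k → ℂ, ∃ V ∈ 𝓝 (0 : Pt),
      (∀ i, ∀ p ∈ V,
        (α i).1 p = c i * Complex.exp (l * u i p) * pdx (u i) p ∧
        (α i).2 p = c i * Complex.exp (l * u i p) * pdy (u i) p) ∧
      (∀ p ∈ V, ∀ q ∈ V,
        ∑ i, c i * Complex.exp (l * u i p) = ∑ i, c i * Complex.exp (l * u i q)) := by
  have hg : ∀ i, ∀ p ∈ U, contr P Q (α i) p = contr P Q (α i) 0 * Complex.exp (l * u i p) := by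
    intro i p hp
    simpa [(hu i).2.1] using contr_eq_mul_exp_of_lie_eq_smul hU.isOpen hU.isPreconnected hP hQ
      (htr i) (hu i) (hα.analytic i) (hα.closed i) (hα.tangent i) (heig i) hp hU.zero_mem
  have hsum : ∀ p ∈ U, ∑ i, contr P Q (α i) 0 * Complex.exp (l * u i p) = 0 := fun p hp => by
    rw [← hα.sum_contr_eq_zero P Q hp]
    exact Finset.sum_congr rfl fun i _ => (hg i p hp).symm
  refine ⟨fun i => contr P Q (α i) 0, U, hU.isOpen.mem_nhds hU.zero_mem, fun i p hp => ?_,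
    fun p hp q hq => by rw [hsum p hp, hsum q hq]⟩
  rw [← hg i p hp]
  exact eq_contr_mul_fd_of_wedge_eq_zero (hα.tangent i p hp) (htr i p hp) ((hu i).2.2 p hp).1
    ((hu i).2.2 p hp).2

/-- Let `W` be a `k`-web on a polydisc `U`, `X` a transverse
infinitesimal automorphism, `u_i` the canonical first integrals, and `λ ≠ 0`. If
`(α_1,…,α_k)` is an abelian relation of `W` with `L_X α_i = λ·α_i` for all `i`, then near
`0` one has `α_i = c_i·e^{λ u_i}·du_i` for constants `c_i`, and `∑ c_i e^{λ u_i}` is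
constant near `0`. -/
theorem stmt_11 (k : ℕ) (U : Set Pt) (hU : IsPolydisc U) (ω : Fin k → Form1)
    (hweb : IsWeb ω U) (P Q : Pt → ℂ)
    (hP : AnalyticOnNhd ℂ P U) (hQ : AnalyticOnNhd ℂ Q U)
    (hinf : IsInfAut P Q ω U) (htr : IsTransverseTo P Q ω U)
    (u : Fin k → Pt → ℂ) (hu : ∀ i, IsCanonicalFI P Q (ω i) (u i) U)
    (l : ℂ) (hl : l ≠ 0)
    (α : Fin k → Form1) (hα : IsAbelianRelOn ω α U)
    (heig : ∀ i, ∀ p ∈ U, (lie P Q (α i)).1 p = l * (α i).1 p ∧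
                          (lie P Q (α i)).2 p = l * (α i).2 p) :
    ∃ c : Fin k → ℂ, ∃ V ∈ 𝓝 (0 : Pt),
      (∀ i, ∀ p ∈ V,
        (α i).1 p = c i * Complex.exp (l * u i p) * pdx (u i) p ∧
        (α i).2 p = c i * Complex.exp (l * u i p) * pdy (u i) p) ∧
      (∀ p ∈ V, ∀ q ∈ V,
        ∑ i, c i * Complex.exp (l * u i p) = ∑ i, c i * Complex.exp (l * u i q)) :=
  stmt_11_general k U hU ω P Q hP hQ htr u hu l α hα heig
end
end
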